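/- Let p_1, …, p_n ∈ ℝ² with n ≥ 1, let y' ∈ ℝ, and let z ∈ ℝ satisfy: z ≥ |y_{p_i} − y'| for every 1 ≤ i ≤ n, and z ≥ δ_{p_i p_j}(y') for every backward pair (i, j) (i.e., i ≤ j with x_{p_j} ≤ x_{p_i}). Define a' := (x_{p_1} − √(z² − (y_{p_1} − y')²), y') and b' := (x_{p_n} + √(z² − (y_{p_n} − y')²), y'). Then the directed Hausdorff distance from the vertices to the segment [a', b'] is at most z: for every 1 ≤ i ≤ n, infDist(p_i, [a', b']) ≤ z. -/

import Mathlib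

open Metric Set

noncomputable section

/-- Points of the Euclidean plane ℝ². -/
abbrev Pt : Type := EuclideanSpace ℝ (Fin 2)

/-- The point (x, y) ∈ ℝ². -/
def pt (x y : ℝ) : Pt := (WithLp.equiv 2 (Fin 2 → ℝ)).symm ![x, y]

/-- The leftward horizontal halfline ←p = {(x, y_p) : x ≤ x_p}. -/
def leftRay (p : Pt) : Set Pt := {z : Pt | z 1 = p 1 ∧ z 0 ≤ p 0}

/-- The rightward horizontal halfline →p = {(x, y_p) : x ≥ x_p}. -/
def rightRay (p : Pt) : Set Pt := {z : Pt | z 1 = p 1 ∧ p 0 ≤ z 0}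

/-- h_{←p}(q): Euclidean distance from q to the leftward halfline at p. -/
def hL (p q : Pt) : ℝ := infDist q (leftRay p)

/-- h_{→p}(q): Euclidean distance from q to the rightward halfline at p. -/
def hR (p q : Pt) : ℝ := infDist q (rightRay p)

/-- h_{←S}(q) = max_{p ∈ S} h_{←p}(q). -/
def hLS (S : Finset Pt) (hS : S.Nonempty) (q : Pt) : ℝ := S.sup' hS fun p => hL p q

/-- h_{→S}(q) = max_{p ∈ S} h_{→p}(q). -/
def hRS (S : Finset Pt) (hS : S.Nonempty) (q : Pt) : ℝ := S.sup' hS fun p => hR p q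

/-- δ_{pq}(y) = inf_x max{‖(x,y) − p‖, ‖(x,y) − q‖}. -/
def delta (p q : Pt) (y : ℝ) : ℝ := ⨅ x : ℝ, max ‖pt x y - p‖ ‖pt x y - q‖

/-- δ'_{pq}(y) = inf_x max{h_{←q}((x,y)), h_{→p}((x,y))}. -/
def delta' (p q : Pt) (y : ℝ) : ℝ := ⨅ x : ℝ, max (hL q (pt x y)) (hR p (pt x y))


lemma pt_coord0 (x y : ℝ) : pt x y 0 = x := rfl
lemma pt_coord1 (x y : ℝ) : pt x y 1 = y := rfl

lemma dist_pt (q : Pt) (t y : ℝ) :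
    dist q (pt t y) = Real.sqrt ((q 0 - t)^2 + (q 1 - y)^2) := by
  rw [EuclideanSpace.dist_eq, Fin.sum_univ_two]
  simp [pt_coord0, pt_coord1, Real.dist_eq, sq_abs]

lemma delta_le_imp (p q : Pt) (y z : ℝ) (h : delta p q y ≤ z) :
    ∃ x : ℝ, dist p (pt x y) ≤ z ∧ dist q (pt x y) ≤ z := by
  have hrw : ∀ r : Pt, ∀ x : ℝ, ‖pt x y - r‖ = dist r (pt x y) := by
    intro r x; rw [← dist_eq_norm, dist_comm]
  set f : ℝ → ℝ := fun x => max ‖pt x y - p‖ ‖pt x y - q‖ with hf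
  have hfeq : f = fun x => max (Real.sqrt ((p 0 - x)^2 + (p 1 - y)^2))
      (Real.sqrt ((q 0 - x)^2 + (q 1 - y)^2)) := by
    funext x
    rw [hf]; simp only; rw [hrw p x, hrw q x, dist_pt, dist_pt]
  have hfc : Continuous f := by rw [hfeq]; fun_prop
  have hlow : ∀ x : ℝ, ‖x‖ - |p 0| ≤ f x := by
    intro x
    have h1 : Real.sqrt ((p 0 - x)^2) ≤ Real.sqrt ((p 0 - x)^2 + (p 1 - y)^2) :=
      Real.sqrt_le_sqrt (by nlinarith [sq_nonneg (p 1 - y)])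
    rw [Real.sqrt_sq_eq_abs] at h1
    have h2 : |x| - |p 0| ≤ |p 0 - x| := by
      have := abs_sub_abs_le_abs_sub x (p 0)
      rw [abs_sub_comm] at this; linarith
    have h3 : Real.sqrt ((p 0 - x)^2 + (p 1 - y)^2) ≤ f x := by
      rw [hfeq]; exact le_max_left _ _
    rw [Real.norm_eq_abs]; linarith
  have hlim : Filter.Tendsto f (Filter.cocompact ℝ) Filter.atTop := by
    apply Filter.tendsto_atTop_mono hlow
    exact Filter.tendsto_atTop_add_const_right _ _ tendsto_norm_cocompact_atTop
  obtain ⟨x, hx⟩ := hfc.exists_forall_le hlim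
  have hfx : f x ≤ z := le_trans (le_ciInf hx) h
  refine ⟨x, ?_, ?_⟩
  · rw [← hrw p x]; exact le_trans (le_max_left _ _) hfx
  · rw [← hrw q x]; exact le_trans (le_max_right _ _) hfx

lemma x_bounds {q : Pt} {x y z : ℝ} (h : dist q (pt x y) ≤ z) :
    q 0 - Real.sqrt (z^2 - (q 1 - y)^2) ≤ x ∧
    x ≤ q 0 + Real.sqrt (z^2 - (q 1 - y)^2) := by
  have hz : 0 ≤ z := le_trans dist_nonneg h
  rw [dist_pt] at h
  have hA0 : 0 ≤ (q 0 - x)^2 + (q 1 - y)^2 := by positivity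
  have hA : (q 0 - x)^2 + (q 1 - y)^2 ≤ z^2 := by
    nlinarith [Real.sq_sqrt hA0, Real.sqrt_nonneg ((q 0 - x)^2 + (q 1 - y)^2)]
  set s := Real.sqrt (z^2 - (q 1 - y)^2) with hsd
  have hs0 : 0 ≤ s := Real.sqrt_nonneg _
  have hs2 : s^2 = z^2 - (q 1 - y)^2 := Real.sq_sqrt (by nlinarith [sq_nonneg (q 0 - x)])
  constructor <;> nlinarith [sq_nonneg (q 0 - x)]

lemma dist_pt_mono {q : Pt} {t t' y : ℝ} (h : |q 0 - t| ≤ |q 0 - t'|) :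
    dist q (pt t y) ≤ dist q (pt t' y) := by
  rw [dist_pt, dist_pt]
  apply Real.sqrt_le_sqrt
  nlinarith [mul_self_le_mul_self (abs_nonneg (q 0 - t)) h, sq_abs (q 0 - t), sq_abs (q 0 - t')]

lemma pt_mem_segment {a b : ℝ} (t y : ℝ) (hat : a ≤ t) (htb : t ≤ b) :
    pt t y ∈ segment ℝ (pt a y) (pt b y) := by
  rcases eq_or_lt_of_le (hat.trans htb) with hab | hab
  · have hta : t = a := le_antisymm (hab ▸ htb) hat
    subst hta
    rw [← hab]
    exact left_mem_segment ℝ _ _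
  · have hba : 0 < b - a := by linarith
    refine ⟨1 - (t - a) / (b - a), (t - a) / (b - a), ?_, ?_, by ring, ?_⟩
    · have : (t - a) / (b - a) ≤ 1 := by
        rw [div_le_one hba]; linarith
      linarith
    · exact div_nonneg (by linarith) (le_of_lt hba)
    · ext i
      simp only [PiLp.add_apply, PiLp.smul_apply, smul_eq_mul]
      fin_cases i <;> simp [pt_coord0, pt_coord1] <;> field_simp <;> ring

theorem stmt_17 (n : ℕ) (hn : 1 ≤ n) (p : Fin n → Pt) (y' z : ℝ)
    (h1 : ∀ i : Fin n, |(p i) 1 - y'| ≤ z)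
    (h2 : ∀ i j : Fin n, i ≤ j → (p j) 0 ≤ (p i) 0 → delta (p i) (p j) y' ≤ z) :
    ∀ i : Fin n,
      infDist (p i)
        (segment ℝ
          (pt ((p ⟨0, hn⟩) 0 - Real.sqrt (z ^ 2 - ((p ⟨0, hn⟩) 1 - y') ^ 2)) y')
          (pt ((p ⟨n - 1, by omega⟩) 0 +
                Real.sqrt (z ^ 2 - ((p ⟨n - 1, by omega⟩) 1 - y') ^ 2)) y'))
      ≤ z := by
  intro i
  set i0 : Fin n := ⟨0, hn⟩ with hi0
  set iN : Fin n := ⟨n - 1, by omega⟩ with hiN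
  set a := p i0 0 - Real.sqrt (z ^ 2 - (p i0 1 - y') ^ 2) with ha
  set b := p iN 0 + Real.sqrt (z ^ 2 - (p iN 1 - y') ^ 2) with hb
  have hs0 : ∀ k : Fin n, 0 ≤ Real.sqrt (z ^ 2 - (p k 1 - y') ^ 2) :=
    fun k => Real.sqrt_nonneg _
  rcases lt_or_ge (p i 0) a with hia | hia
  · -- left of a
    have hle : i0 ≤ i := by simp [hi0, Fin.le_def]
    have hxx : p i 0 ≤ p i0 0 := by
      have := hs0 i0; rw [ha] at hia; linarith
    obtain ⟨x, hx0, hxi⟩ := delta_le_imp _ _ _ _ (h2 i0 i hle hxx)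
    have hax : a ≤ x := by rw [ha]; exact (x_bounds hx0).1
    have hd : dist (p i) (pt a y') ≤ z := by
      refine le_trans (dist_pt_mono ?_) hxi
      rw [abs_of_nonpos (by linarith), abs_of_nonpos (by linarith)]; linarith
    exact le_trans (infDist_le_dist_of_mem (left_mem_segment ℝ _ _)) hd
  rcases le_or_gt (p i 0) b with hib | hib
  · -- middle
    have hmem := pt_mem_segment (y := y') (p i 0) hia hib
    refine le_trans (infDist_le_dist_of_mem hmem) ?_
    rw [dist_pt]
    simp only [sub_self]
    rw [show (0:ℝ)^2 + (p i 1 - y')^2 = (p i 1 - y')^2 by ring, Real.sqrt_sq_eq_abs]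
    exact h1 i
  · -- right of b
    have hle : i ≤ iN := by
      have := i.isLt
      simp only [hiN, Fin.le_def]
      omega
    have hxx : p iN 0 ≤ p i 0 := by
      have := hs0 iN; rw [hb] at hib; linarith
    obtain ⟨x, hxi, hxN⟩ := delta_le_imp _ _ _ _ (h2 i iN hle hxx)
    have hxb : x ≤ b := by rw [hb]; exact (x_bounds hxN).2
    have hd : dist (p i) (pt b y') ≤ z := by
      refine le_trans (dist_pt_mono ?_) hxi
      rw [abs_of_nonneg (by linarith), abs_of_nonneg (by linarith)]; linarith
    exact le_trans (infDist_le_dist_of_mem (right_mem_segment ℝ _ _)) hd
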